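/- arXiv:1704.02177 — 5 statements merged into one kernel-verified Lean document; each statement's English description precedes it below -/
import Mathlib

section
/- Let C be a strictly upper triangular n×n matrix over ℤ/2. For 1 ≤ j < k ≤ n let C_{jk} be the n×n matrix whose j-th and k-th rows equal the j-th and k-th rows of C and whose other rows are zero. Then C satisfies the spin conditions (all row sums ≡ 0 mod 2, and for all 1 ≤ a < b ≤ n, ∑_{r=1}^n c_{a,r}c_{b,r} + c_{a,b}·∑_{r<s} c_{b,r}c_{b,s} ≡ 0 mod 2) if and only if C_{jk} satisfies these spin conditions for every 1 ≤ j < k ≤ n. -/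
/-! Both the row-sum condition for row `i` and the pair condition for `a < b` only read the rows
named in them, so they hold for `C` iff they hold for any matrix keeping those rows. Every row lies
in some pair `j < k` unless `n = 1`, where the single entry of `C` is diagonal and hence zero. -/

open Finset

/-- The spin conditions on a Bott matrix: all row sums vanish mod 2, and for every
pair of indices `a < b`, `∑ r, c_{a,r} c_{b,r} + c_{a,b} · ∑_{r<s} c_{b,r} c_{b,s} = 0`. -/
def SpinCond {n : ℕ} (C : Matrix (Fin n) (Fin n) (ZMod 2)) : Prop :=
  (∀ i : Fin n, ∑ j : Fin n, C i j = 0) ∧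
  (∀ a b : Fin n, a < b →
    (∑ r : Fin n, C a r * C b r) +
      C a b * ∑ r : Fin n, ∑ s ∈ univ.filter (fun s => r < s), C b r * C b s = 0)

namespace Matrix

variable {ι α : Type*} [Zero α]

def restrictRows (C : Matrix ι ι α) (p : ι → Prop) [DecidablePred p] : Matrix ι ι α :=
  fun a b => if p a then C a b else 0

@[simp]
theorem restrictRows_apply_of_pos (C : Matrix ι ι α) {p : ι → Prop} [DecidablePred p] {a : ι}
    (ha : p a) (b : ι) : C.restrictRows p a b = C a b :=
  if_pos ha

@[simp]
theorem restrictRows_apply_of_neg (C : Matrix ι ι α) {p : ι → Prop} [DecidablePred p] {a : ι}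
    (ha : ¬p a) (b : ι) : C.restrictRows p a b = 0 :=
  if_neg ha

end Matrix

namespace SpinCond

variable {n : ℕ} {C : Matrix (Fin n) (Fin n) (ZMod 2)}

theorem restrictRows (h : SpinCond C) (p : Fin n → Prop) [DecidablePred p] :
    SpinCond (C.restrictRows p) := by
  refine ⟨fun i => ?_, fun a b hab => ?_⟩
  · by_cases hi : p i
    · simpa [hi] using h.1 i
    · simp [hi]
  · by_cases ha : p a
    · by_cases hb : p b
      · simpa [ha, hb] using h.2 a b hab
      · simp [hb]
    · simp [ha]

variable {p : Fin n → Prop} [DecidablePred p]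

theorem row_sum_of_restrictRows (h : SpinCond (C.restrictRows p)) {i : Fin n} (hi : p i) :
    ∑ j, C i j = 0 := by
  simpa [hi] using h.1 i

theorem pair_of_restrictRows (h : SpinCond (C.restrictRows p)) {a b : Fin n} (ha : p a)
    (hb : p b) (hab : a < b) :
    (∑ r, C a r * C b r) + C a b * ∑ r, ∑ s ∈ univ.filter (fun s => r < s), C b r * C b s = 0 := by
  simpa [ha, hb] using h.2 a b hab

end SpinCond

theorem stmt3 (n : ℕ) (C : Matrix (Fin n) (Fin n) (ZMod 2))
    (hC : ∀ i j : Fin n, j ≤ i → C i j = 0) :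
    SpinCond C ↔
      ∀ j k : Fin n, j < k →
        SpinCond (fun a b => if a = j ∨ a = k then C a b else 0) := by
  refine ⟨fun h j k _ => h.restrictRows _, fun h => ⟨fun i => ?_, fun a b hab =>
    (h a b hab).pair_of_restrictRows (.inl rfl) (.inr rfl) hab⟩⟩
  by_cases hi : ∃ j, j ≠ i
  · obtain ⟨j, hji⟩ := hi
    rcases hji.lt_or_gt with hlt | hlt
    · exact (h j i hlt).row_sum_of_restrictRows (.inr rfl)
    · exact (h i j hlt).row_sum_of_restrictRows (.inl rfl)
  · push Not at hi
    rw [Fintype.sum_eq_single i fun j hj => absurd (hi j) hj]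
    exact hC i i le_rfl
end

section
/- Let B = P C P⁻¹ where P is a permutation matrix and C is strictly upper triangular over ℤ/2. Then C satisfies the conditions '∑_j c_{i,j} = 0 for all i, and ∑_r c_{j,r}c_{k,r} + c_{j,k}·∑_{r<s} c_{k,r}c_{k,s} = 0 for all pairs j ≠ k' if and only if B satisfies the same conditions (with b in place of c). -/
/-! Conjugating by a permutation matrix relabels rows and columns simultaneously, so `B` is `C`
with indices permuted by `σ⁻¹`. Both conditions are invariant under such a relabelling: the row sums
and the sums over `r` are merely reindexed, and `∑_{r<s} c_r c_s` is a sum over the unordered pairs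
`{r, s}`, which does not depend on the order of the index set. -/

open Finset Matrix

theorem Matrix.permMatrix_mul_mul_inv {n R : Type*} [Fintype n] [DecidableEq n] [CommRing R]
    (σ : Equiv.Perm n) (M : Matrix n n R) :
    σ.permMatrix R * M * (σ.permMatrix R)⁻¹ = M.submatrix σ σ := by
  have hinv : (σ.permMatrix R)⁻¹ = (σ⁻¹).permMatrix R :=
    inv_eq_right_inv (by rw [← permMatrix_mul, inv_mul_cancel, permMatrix_one])
  rw [hinv, PEquiv.toMatrix_toPEquiv_mul, PEquiv.mul_toMatrix_toPEquiv, submatrix_submatrix]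
  rfl

section PairSum

variable {ι κ R : Type*} [Fintype ι] [LinearOrder ι] [Fintype κ] [LinearOrder κ] [CommSemiring R]

theorem sum_sum_lt_mul_eq_sum_sym2 (a : ι → R) :
    ∑ r, ∑ s with r < s, a r * a s =
      ∑ z : Sym2 ι with ¬z.IsDiag, Sym2.lift ⟨fun r s => a r * a s, fun _ _ => mul_comm _ _⟩ z := by
  have hlt : univ.offDiag.filter (fun p : ι × ι => p.1 < p.2) =
      (univ ×ˢ univ).filter (fun p => p.1 < p.2) := by
    ext p
    simpa using ne_of_lt
  rw [← sym2_univ, sum_sym2_filter_not_isDiag, hlt, sum_filter, sum_product]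
  simp [sum_filter]

theorem sum_sum_lt_mul_comp_equiv (e : κ ≃ ι) (a : ι → R) :
    ∑ r, ∑ s with r < s, a (e r) * a (e s) = ∑ r, ∑ s with r < s, a r * a s := by
  have hbij : Function.Bijective (Sym2.map e) :=
    ⟨Sym2.map.injective e.injective, fun z => ⟨Sym2.map e.symm z, by simp [Sym2.map_map]⟩⟩
  rw [sum_sum_lt_mul_eq_sum_sym2, sum_sum_lt_mul_eq_sum_sym2, sum_filter, sum_filter]
  refine Fintype.sum_bijective _ hbij _ _ fun z => ?_
  simp [Sym2.isDiag_map e.injective, Sym2.lift_map_apply]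

end PairSum

namespace Matrix

variable {ι κ R : Type*} [Fintype ι] [Fintype κ]

/- For the ℤ/2 Bott matrix of a real Bott manifold, these are the criteria for the manifold to be
orientable and, when orientable, spin. -/
def IsRealBottOrientable [AddCommMonoid R] (D : Matrix ι ι R) : Prop :=
  ∀ i, ∑ j, D i j = 0

def IsRealBottSpin [LinearOrder ι] [CommSemiring R] (D : Matrix ι ι R) : Prop :=
  ∀ j k, j ≠ k → (∑ r, D j r * D k r) + D j k * ∑ r, ∑ s with r < s, D k r * D k s = 0

theorem isRealBottOrientable_submatrix_iff [AddCommMonoid R] (D : Matrix ι ι R) (e : κ ≃ ι) :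
    (D.submatrix e e).IsRealBottOrientable ↔ D.IsRealBottOrientable := by
  rw [IsRealBottOrientable, IsRealBottOrientable, e.surjective.forall]
  simp only [submatrix_apply, Equiv.sum_comp e (D _)]

theorem isRealBottSpin_submatrix_iff [LinearOrder ι] [LinearOrder κ] [CommSemiring R]
    (D : Matrix ι ι R) (e : κ ≃ ι) :
    (D.submatrix e e).IsRealBottSpin ↔ D.IsRealBottSpin := by
  rw [IsRealBottSpin, IsRealBottSpin, e.surjective.forall₂]
  refine forall₂_congr fun j k => ?_
  simp only [submatrix_apply, e.injective.ne_iff, Equiv.sum_comp e (fun r => D (e j) r * D (e k) r),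
    sum_sum_lt_mul_comp_equiv e (D (e k))]

end Matrix

theorem stmt5_general (n : ℕ) (σ : Equiv.Perm (Fin n))
    (C B P : Matrix (Fin n) (Fin n) (ZMod 2))
    (hP : P = Matrix.of fun i j => if i = σ j then (1 : ZMod 2) else 0)
    (hB : B = P * C * P⁻¹) :
    ((∀ i : Fin n, ∑ j : Fin n, C i j = 0) ∧
      (∀ j k : Fin n, j ≠ k →
        (∑ r : Fin n, C j r * C k r) +
          C j k * ∑ r : Fin n, ∑ s ∈ univ.filter (fun s => r < s), C k r * C k s = 0))
    ↔
    ((∀ i : Fin n, ∑ j : Fin n, B i j = 0) ∧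
      (∀ j k : Fin n, j ≠ k →
        (∑ r : Fin n, B j r * B k r) +
          B j k * ∑ r : Fin n, ∑ s ∈ univ.filter (fun s => r < s), B k r * B k s = 0)) := by
  have hPσ : P = (σ⁻¹).permMatrix (ZMod 2) := by
    ext i j
    simp [hP, PEquiv.toMatrix_apply, Equiv.Perm.inv_def, Equiv.symm_apply_eq]
  have hBC : B = C.submatrix ⇑σ⁻¹ ⇑σ⁻¹ := by
    rw [hB, hPσ, permMatrix_mul_mul_inv]
  change C.IsRealBottOrientable ∧ C.IsRealBottSpin ↔ B.IsRealBottOrientable ∧ B.IsRealBottSpin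
  rw [hBC, isRealBottOrientable_submatrix_iff, isRealBottSpin_submatrix_iff]

theorem stmt5 (n : ℕ) (σ : Equiv.Perm (Fin n))
    (C B P : Matrix (Fin n) (Fin n) (ZMod 2))
    (hC : ∀ i j : Fin n, j ≤ i → C i j = 0)
    (hP : P = Matrix.of fun i j => if i = σ j then (1 : ZMod 2) else 0)
    (hB : B = P * C * P⁻¹) :
    ((∀ i : Fin n, ∑ j : Fin n, C i j = 0) ∧
      (∀ j k : Fin n, j ≠ k →
        (∑ r : Fin n, C j r * C k r) +
          C j k * ∑ r : Fin n, ∑ s ∈ univ.filter (fun s => r < s), C k r * C k s = 0))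
    ↔
    ((∀ i : Fin n, ∑ j : Fin n, B i j = 0) ∧
      (∀ j k : Fin n, j ≠ k →
        (∑ r : Fin n, B j r * B k r) +
          B j k * ∑ r : Fin n, ∑ s ∈ univ.filter (fun s => r < s), B k r * B k s = 0)) :=
  stmt5_general n σ C B P hP hB
end

section
/- Let C be a strictly upper triangular n×n matrix over ℤ/2 satisfying the spin conditions (row sums 0 mod 2, and for all j < k, ∑_r c_{j,r}c_{k,r} + c_{j,k}·∑_{r<s}c_{k,r}c_{k,s} = 0 mod 2). Then for any 1 ≤ m < n, the (n−m)×(n−m) submatrix C^m obtained by deleting the first m rows and columns of C also satisfies the spin conditions. -/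
open Finset

section

variable {R : Type*} [CommSemiring R] {k n : ℕ}

theorem sum_pairs_comp_strictMono {e : Fin k → Fin n} (he : StrictMono e) {v : Fin n → R}
    (hv : ∀ j ∉ Set.range e, v j = 0) :
    ∑ r, ∑ s ∈ univ.filter (fun s => r < s), v (e r) * v (e s) =
      ∑ r, ∑ s ∈ univ.filter (fun s => r < s), v r * v s := by
  simp only [sum_filter]
  refine Fintype.sum_of_injective e he.injective _ _ (fun r hr => by simp [hv r hr]) fun r => ?_
  refine Fintype.sum_of_injective e he.injective _ _ (fun s hs => by simp [hv s hs]) fun s => ?_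
  simp only [he.lt_iff_lt]

/-- Only the entries of the rows `e a` in the columns `range e` enter the conditions for the
submatrix, and strict upper triangularity puts all nonzero entries of such rows there. -/
theorem SpinCond.submatrix {C : Matrix (Fin n) (Fin n) (ZMod 2)}
    (hC : ∀ i j : Fin n, j ≤ i → C i j = 0) (hspin : SpinCond C)
    {e : Fin k → Fin n} (he : StrictMono e) (hrange : IsUpperSet (Set.range e)) :
    SpinCond (C.submatrix e e) := by
  have hrow : ∀ a, ∀ j ∉ Set.range e, C (e a) j = 0 := fun a j hj =>
    hC _ _ (not_lt.1 fun hlt => hj (hrange hlt.le (Set.mem_range_self a)))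
  obtain ⟨hsum, hpair⟩ := hspin
  refine ⟨fun a => ?_, fun a b hab => ?_⟩
  · rw [← hsum (e a)]
    exact Fintype.sum_of_injective e he.injective _ _ (hrow a) fun _ => rfl
  · rw [← hpair (e a) (e b) (he hab)]
    simp only [Matrix.submatrix_apply, sum_pairs_comp_strictMono he (hrow b)]
    congr 1
    exact Fintype.sum_of_injective e he.injective _ _
      (fun j hj => by simp [hrow a j hj]) fun _ => rfl

end

theorem stmt14 (n : ℕ) (C : Matrix (Fin n) (Fin n) (ZMod 2))
    (hC : ∀ i j : Fin n, j ≤ i → C i j = 0)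
    (hspin : SpinCond C) :
    ∀ m : ℕ, 1 ≤ m → m < n →
      SpinCond (n := n - m) (fun i j =>
        C ⟨m + i.val, by have := i.isLt; omega⟩ ⟨m + j.val, by have := j.isLt; omega⟩) := by
  intro m _ hmn
  let e : Fin (n - m) → Fin n := fun i => ⟨m + i.val, by omega⟩
  have he : StrictMono e := fun _ _ hij => Nat.add_lt_add_left hij m
  have hrange : IsUpperSet (Set.range e) := by
    rintro _ j hij ⟨i, rfl⟩
    refine ⟨⟨j.val - m, by omega⟩, Fin.ext ?_⟩
    simp only [e, Fin.le_def] at hij ⊢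
    omega
  exact hspin.submatrix hC he hrange
end

section
/- Let R = (ℤ/2)[x_1,…,x_{2n}] and I the ideal generated by x_j x_{n+j} (1 ≤ j ≤ n), x_1 + x_{n+1}, and x_j + x_{n+j} + ∑_{i=1}^{j-1} c_{i,j} x_{n+i} for 2 ≤ j ≤ n, where C is strictly upper triangular over ℤ/2. Then in R/I the equality ∏_{i=1}^{2n}(1 + x_i) = ∏_{j=2}^{n} (1 + ∑_{i=1}^{j-1} c_{i,j} x_{n+i}) holds. -/
/-!
Modulo the ideal, `x_j x_{n+j} = 0` and, in characteristic 2, `x_j + x_{n+j} = ∑_{i<j} c_{i,j} x_{n+i}`,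
so each pair of factors `(1 + x_j)(1 + x_{n+j}) = 1 + x_j + x_{n+j}` becomes `1 + ∑_{i<j} c_{i,j} x_{n+i}`;
for `j = 1` that sum is empty, so the factor is `1` and can be dropped.
-/

open Finset MvPolynomial

/-- The ideal of relations presenting `H^*(Y_n(C); ℤ/2)`; indices `0`-based. -/
noncomputable def bottIdeal (n : ℕ) (A : Matrix (Fin n) (Fin n) (ZMod 2)) :
    Ideal (MvPolynomial (Fin (2 * n)) (ZMod 2)) :=
  Ideal.span
    ((Set.range fun j : Fin n =>
        X (⟨j.val, by have := j.isLt; omega⟩ : Fin (2 * n)) *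
          X ⟨n + j.val, by have := j.isLt; omega⟩) ∪
     (Set.range fun j : Fin n =>
        X (⟨j.val, by have := j.isLt; omega⟩ : Fin (2 * n)) +
          X ⟨n + j.val, by have := j.isLt; omega⟩ +
          ∑ i ∈ univ.filter (fun i => i < j),
            C (A i j) * X ⟨n + i.val, by have := i.isLt; omega⟩))

theorem one_add_mul_one_add_eq_of_mul_eq_zero {R : Type*} [CommRing R] {a b s : R}
    (h2 : (2 : R) = 0) (hab : a * b = 0) (hsum : a + b + s = 0) :
    (1 + a) * (1 + b) = 1 + s := by
  linear_combination hab + hsum - s * h2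

theorem prod_univ_fin_two_mul {M : Type*} [CommMonoid M] (n : ℕ) (f : Fin (2 * n) → M) :
    ∏ i, f i = ∏ j : Fin n, f ⟨j, by omega⟩ * f ⟨n + j, by omega⟩ := by
  rw [← Fin.prod_congr' f (two_mul n).symm, Fin.prod_univ_add, ← prod_mul_distrib]
  rfl

namespace bottIdeal

variable {n : ℕ} {A : Matrix (Fin n) (Fin n) (ZMod 2)}

noncomputable def aboveDiagonalSum (n : ℕ) (A : Matrix (Fin n) (Fin n) (ZMod 2)) (j : Fin n) :
    MvPolynomial (Fin (2 * n)) (ZMod 2) :=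
  ∑ i ∈ univ.filter (fun i => i < j), C (A i j) * X ⟨n + i.val, by omega⟩

theorem aboveDiagonalSum_of_val_eq_zero {j : Fin n} (hj : j.val = 0) :
    aboveDiagonalSum n A j = 0 := by
  refine sum_eq_zero fun i hi => ?_
  simp only [mem_filter, Fin.lt_def, hj] at hi
  omega

theorem two_eq_zero_quotient : (2 : MvPolynomial (Fin (2 * n)) (ZMod 2) ⧸ bottIdeal n A) = 0 := by
  simpa only [map_ofNat, map_zero] using
    congrArg (Ideal.Quotient.mk (bottIdeal n A)) CharTwo.two_eq_zero

theorem mk_X_mul_X (j : Fin n) :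
    Ideal.Quotient.mk (bottIdeal n A) (X ⟨j, by omega⟩ * X ⟨n + j, by omega⟩) = 0 :=
  Ideal.Quotient.eq_zero_iff_mem.mpr (Ideal.subset_span (Or.inl ⟨j, rfl⟩))

theorem mk_X_add_X_add_aboveDiagonalSum (j : Fin n) :
    Ideal.Quotient.mk (bottIdeal n A)
      (X ⟨j, by omega⟩ + X ⟨n + j, by omega⟩ + aboveDiagonalSum n A j) = 0 :=
  Ideal.Quotient.eq_zero_iff_mem.mpr (Ideal.subset_span (Or.inr ⟨j, rfl⟩))

theorem mk_one_add_X_mul_one_add_X (j : Fin n) :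
    Ideal.Quotient.mk (bottIdeal n A) ((1 + X ⟨j, by omega⟩) * (1 + X ⟨n + j, by omega⟩)) =
      Ideal.Quotient.mk (bottIdeal n A) (1 + aboveDiagonalSum n A j) := by
  simp only [map_mul, map_add, map_one]
  refine one_add_mul_one_add_eq_of_mul_eq_zero two_eq_zero_quotient ?_ ?_
  · rw [← map_mul, mk_X_mul_X]
  · rw [← map_add, ← map_add, mk_X_add_X_add_aboveDiagonalSum]

end bottIdeal

open bottIdeal in
theorem stmt18 (n : ℕ) (A : Matrix (Fin n) (Fin n) (ZMod 2)) :
    (∏ i : Fin (2 * n), ((1 : MvPolynomial (Fin (2 * n)) (ZMod 2)) + X i)) -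
      ∏ j ∈ univ.filter (fun j : Fin n => 0 < j.val),
        (1 + ∑ i ∈ univ.filter (fun i => i < j),
          C (A i j) * X (⟨n + i.val, by have := i.isLt; omega⟩ : Fin (2 * n)))
      ∈ bottIdeal n A := by
  rw [← Ideal.Quotient.eq]
  change _ = Ideal.Quotient.mk _ (∏ j ∈ _, (1 + aboveDiagonalSum n A j))
  have hdrop : ∏ j ∈ univ.filter (fun j : Fin n => 0 < j.val), (1 + aboveDiagonalSum n A j) =
      ∏ j, (1 + aboveDiagonalSum n A j) :=
    prod_filter_of_ne fun j _ hne => by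
      by_contra hj
      exact hne (by rw [aboveDiagonalSum_of_val_eq_zero (by omega), add_zero])
  rw [hdrop, prod_univ_fin_two_mul, map_prod, map_prod]
  exact prod_congr rfl fun j _ => mk_one_add_X_mul_one_add_X j
end

section
/- Let R = (ℤ/2)[x_1,…,x_{2n}] with ideal I generated by x_j x_{n+j} (1 ≤ j ≤ n), x_1 + x_{n+1}, and x_j + x_{n+j} + ∑_{i=1}^{j-1} c_{i,j} x_{n+i} for 2 ≤ j ≤ n (C strictly upper triangular over ℤ/2). Then the monomial x_{n+1} x_{n+2} ⋯ x_{n+m-1} x_{n+m}² lies in I for every 1 ≤ m ≤ n−1 (in particular x_{n+1}² ∈ I). -/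
/-!
Write `y_k` for the second block of variables and `P_k = y_0 ⋯ y_{k-1}`. The linear relation
for `k` says `x_k ≡ -(y_k + ∑_{i<k} a_{ik} y_i)`, so multiplying by `P_k y_k` and using
`x_k y_k ≡ 0` gives `P_k y_k² ≡ -∑_{i<k} a_{ik} P_k y_k y_i`. Each summand is a multiple of
`P_i y_i²`, because `P_i y_i` divides `P_k`; strong induction on `k` finishes.
-/

open Finset MvPolynomial

theorem prod_Iio_mul_sq_mem {ι R : Type*} [LinearOrder ι] [WellFoundedLT ι]
    [LocallyFiniteOrderBot ι] [CommRing R] {I : Ideal R} {x y : ι → R} {a : ι → ι → R}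
    (hxy : ∀ k, x k * y k ∈ I) (hlin : ∀ k, x k + y k + ∑ i ∈ Iio k, a i k * y i ∈ I)
    (k : ι) : (∏ i ∈ Iio k, y i) * y k ^ 2 ∈ I := by
  induction k using WellFoundedLT.induction with
  | _ k ih =>
  set P := ∏ i ∈ Iio k, y i
  have hsplit : P * y k ^ 2 = P * y k * (x k + y k + ∑ i ∈ Iio k, a i k * y i) -
      P * (x k * y k) - ∑ i ∈ Iio k, P * y k * (a i k * y i) := by
    rw [← mul_sum]; ring
  rw [hsplit]
  refine sub_mem (sub_mem (I.mul_mem_left _ (hlin k)) (I.mul_mem_left _ (hxy k)))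
    (sum_mem fun i hi => I.mem_of_dvd ?_ (ih i (mem_Iio.1 hi)))
  obtain ⟨c, hc⟩ : (∏ j ∈ Iio i, y j) * y i ∣ P := by
    rw [prod_Iio_mul_eq_prod_Iic]
    exact prod_dvd_prod_of_subset _ _ _ fun j hj =>
      mem_Iio.2 ((mem_Iic.1 hj).trans_lt (mem_Iio.1 hi))
  exact ⟨c * y k * a i k, by rw [hc]; ring⟩

section bottIdeal

variable {n : ℕ} (A : Matrix (Fin n) (Fin n) (ZMod 2)) (j : Fin n)

theorem X_mul_X_mem_bottIdeal :
    X (⟨j, by omega⟩ : Fin (2 * n)) * X ⟨n + j, by omega⟩ ∈ bottIdeal n A :=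
  Ideal.subset_span (Or.inl ⟨j, rfl⟩)

theorem X_add_X_add_sum_mem_bottIdeal :
    X (⟨j, by omega⟩ : Fin (2 * n)) + X ⟨n + j, by omega⟩ +
      ∑ i ∈ Iio j, C (A i j) * X ⟨n + i, by omega⟩ ∈ bottIdeal n A := by
  rw [← filter_gt_eq_Iio]
  exact Ideal.subset_span (Or.inr ⟨j, rfl⟩)

theorem prod_X_mul_X_sq_mem_bottIdeal :
    (∏ i ∈ Iio j, X (⟨n + i, by omega⟩ : Fin (2 * n))) * X ⟨n + j, by omega⟩ ^ 2
      ∈ bottIdeal n A :=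
  prod_Iio_mul_sq_mem (X_mul_X_mem_bottIdeal A) (X_add_X_add_sum_mem_bottIdeal A) j

end bottIdeal

theorem stmt19 (n : ℕ) (A : Matrix (Fin n) (Fin n) (ZMod 2)) :
    ∀ (m : ℕ) (hm1 : 1 ≤ m) (hm2 : m ≤ n - 1),
      (∏ i : Fin (m - 1),
          X (⟨n + i.val, by have := i.isLt; omega⟩ : Fin (2 * n))) *
        X (⟨n + (m - 1), by omega⟩ : Fin (2 * n)) ^ 2
        ∈ bottIdeal n A := by
  intro m hm1 hm2
  have hm : m - 1 + 1 ≤ n := by omega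
  have key := prod_X_mul_X_sq_mem_bottIdeal A ((Fin.last (m - 1)).castLE hm)
  rwa [Fin.prod_Iio_castLE, Fin.Iio_last_eq_map, prod_map] at key
end
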